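/- arXiv:0906.1771 — 3 statements merged into one kernel-verified Lean document; each statement's English description precedes it below -/
import Mathlib

section
/- Let G be a just infinite profinite group and let H be a closed subgroup of G of finite index h. Then for all sufficiently large n, ob_G(hn) ≤ h · ob_H(n). -/
/-- A topological group is just infinite if it is infinite and every nontrivial
closed normal subgroup has finite index. -/
def JustInfinite (G : Type*) [Group G] [TopologicalSpace G] : Prop :=
  Infinite G ∧ ∀ N : Subgroup G, N.Normal → IsClosed (N : Set G) → N ≠ ⊥ → N.FiniteIndex

/-- The oblique core `Ob_G(H) = H ∩ ⋂ {K ⊴_o G ∣ K ≰ H}`. -/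
def obliqueCore {G : Type*} [Group G] [TopologicalSpace G] (H : Subgroup G) : Subgroup G :=
  H ⊓ ⨅ (K : Subgroup G) (_ : K.Normal ∧ IsOpen (K : Set G) ∧ ¬ K ≤ H), K

/-- `I⊲_n(G)`: the intersection of all open normal subgroups of `G` of index at
most `n`. -/
def normalIndexCap (G : Type*) [Group G] [TopologicalSpace G] (n : ℕ) : Subgroup G :=
  ⨅ (K : Subgroup G) (_ : K.Normal ∧ IsOpen (K : Set G) ∧ K.index ≤ n), K

/-- `OI_n(G) = Ob_G(I⊲_n(G))`. -/
def OI (G : Type*) [Group G] [TopologicalSpace G] (n : ℕ) : Subgroup G :=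
  obliqueCore (normalIndexCap G n)

/-- The generalised obliquity function `ob_G(n) = |G : OI_n(G)|`, with values in
`Cardinal` so that infinite index is recorded faithfully. -/
noncomputable def obFun (G : Type*) [Group G] [TopologicalSpace G] (n : ℕ) : Cardinal :=
  Cardinal.mk (G ⧸ OI G n)


/-!
For `x ∉ H` the closed normal closure `N(x)` of `x` is open, because `G` is just infinite, so it
meets `H` in a nontrivial open subgroup, which escapes `I⊲_n(H)` once `n` is large. This
condition is open in `x`, so by compactness of `G ∖ H` a single `n₀` works for all `x ∉ H`;
hence every open normal `K ≰ H` satisfies `K ∩ H ≰ I⊲_n(H)` for `n ≥ n₀`, and `OI_n(H)` lies in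
the intersection `D` of all such `K`. If `D = 1` then `OI_n(H) = 1` and the bound is trivial.
Otherwise `D` is open, so `I⊲_n(H) ≤ D` for large `n`; as an open normal subgroup of index at
most `hn` either lies in `H`, with index at most `n` there, or contains `D`, this gives
`OI_n(H) ≤ OI_{hn}(G)` and hence `|G : OI_{hn}(G)| ≤ h |H : OI_n(H)|`.
-/

open scoped Pointwise

section Cores

variable {G : Type*} [Group G] [TopologicalSpace G]

theorem normalIndexCap_le {n : ℕ} {K : Subgroup G} (hKn : K.Normal) (hKo : IsOpen (K : Set G))
    (hKi : K.index ≤ n) : normalIndexCap G n ≤ K :=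
  iInf₂_le K ⟨hKn, hKo, hKi⟩

theorem le_normalIndexCap {n : ℕ} {L : Subgroup G}
    (hL : ∀ K : Subgroup G, K.Normal → IsOpen (K : Set G) → K.index ≤ n → L ≤ K) :
    L ≤ normalIndexCap G n :=
  le_iInf₂ fun K hK => hL K hK.1 hK.2.1 hK.2.2

theorem normalIndexCap_antitone : Antitone (normalIndexCap G) := fun _ _ hmn =>
  le_normalIndexCap fun _ hKn hKo hKi => normalIndexCap_le hKn hKo (hKi.trans hmn)

theorem isClosed_normalIndexCap [SeparatelyContinuousMul G] (n : ℕ) :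
    IsClosed (normalIndexCap G n : Set G) := by
  simp only [normalIndexCap, Subgroup.coe_iInf]
  exact isClosed_iInter fun K => isClosed_iInter fun hK => K.isClosed_of_isOpen hK.2.1

theorem OI_le_normalIndexCap (n : ℕ) : OI G n ≤ normalIndexCap G n :=
  inf_le_left

theorem OI_le_of_not_le {n : ℕ} {K : Subgroup G} (hKn : K.Normal) (hKo : IsOpen (K : Set G))
    (hK : ¬K ≤ normalIndexCap G n) : OI G n ≤ K :=
  inf_le_right.trans (iInf₂_le K ⟨hKn, hKo, hK⟩)

theorem le_OI {n : ℕ} {L : Subgroup G} (hcap : L ≤ normalIndexCap G n)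
    (hL : ∀ K : Subgroup G, K.Normal → IsOpen (K : Set G) → ¬K ≤ normalIndexCap G n → L ≤ K) :
    L ≤ OI G n :=
  le_inf hcap (le_iInf₂ fun K hK => hL K hK.1 hK.2.1 hK.2.2)

/-- The second factor of `obliqueCore H = H ⊓ obliqueCap H`. -/
def obliqueCap (H : Subgroup G) : Subgroup G :=
  ⨅ (K : Subgroup G) (_ : K.Normal ∧ IsOpen (K : Set G) ∧ ¬K ≤ H), K

theorem obliqueCap_le {H K : Subgroup G} (hKn : K.Normal) (hKo : IsOpen (K : Set G))
    (hKH : ¬K ≤ H) : obliqueCap H ≤ K :=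
  iInf₂_le K ⟨hKn, hKo, hKH⟩

theorem le_obliqueCap {H L : Subgroup G}
    (hL : ∀ K : Subgroup G, K.Normal → IsOpen (K : Set G) → ¬K ≤ H → L ≤ K) :
    L ≤ obliqueCap H :=
  le_iInf₂ fun K hK => hL K hK.1 hK.2.1 hK.2.2

instance obliqueCap_normal (H : Subgroup G) : (obliqueCap H).Normal :=
  Subgroup.normal_iInf_normal fun _ => Subgroup.normal_iInf_normal fun hK => hK.1

theorem isClosed_obliqueCap [SeparatelyContinuousMul G] (H : Subgroup G) :
    IsClosed (obliqueCap H : Set G) := by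
  simp only [obliqueCap, Subgroup.coe_iInf]
  exact isClosed_iInter fun K => isClosed_iInter fun hK => K.isClosed_of_isOpen hK.2.1

end Cores

section Index

variable {G : Type*} [Group G]

theorem index_subgroupOf_le_of_le_index_mul {H M : Subgroup G} [H.FiniteIndex] {n : ℕ}
    (hMH : M ≤ H) (hMi : M.index ≤ H.index * n) : (M.subgroupOf H).index ≤ n := by
  have hrel : (M.subgroupOf H).index * H.index = M.index := Subgroup.relIndex_mul_index hMH
  exact Nat.le_of_mul_le_mul_right (by rw [hrel, mul_comm n]; exact hMi)
    (Nat.pos_of_ne_zero Subgroup.FiniteIndex.index_ne_zero)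

theorem mk_quotient_le_index_mul {H : Subgroup G} [H.FiniteIndex] {L : Subgroup H}
    {M : Subgroup G} (hLM : L.map H.subtype ≤ M) :
    Cardinal.mk (G ⧸ M) ≤ H.index * Cardinal.mk (H ⧸ L) := by
  have hL : (L.map H.subtype).subgroupOf H = L :=
    Subgroup.comap_map_eq_self_of_injective H.subtype_injective L
  calc Cardinal.mk (G ⧸ M)
      ≤ Cardinal.mk (G ⧸ L.map H.subtype) :=
        Cardinal.mk_le_of_surjective (f := Subgroup.quotientMapOfLE hLM)
          fun q => QuotientGroup.induction_on q fun g => ⟨g, rfl⟩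
    _ = Cardinal.mk (G ⧸ H) * Cardinal.mk (H ⧸ L) := by
        rw [Cardinal.mk_congr (Subgroup.quotientEquivProdOfLE (Subgroup.map_subtype_le L)), hL,
          Cardinal.mk_prod, Cardinal.lift_id, Cardinal.lift_id]
    _ = H.index * Cardinal.mk (H ⧸ L) := by rw [Subgroup.index, Nat.cast_card]

end Index

section Containment

variable {G : Type*} [Group G] [TopologicalSpace G]

theorem normalIndexCap_le_subgroupOf {H K : Subgroup G} {n : ℕ} (hK : K.Normal)
    (hKo : IsOpen (K : Set G)) (hKi : (K.subgroupOf H).index ≤ n) :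
    normalIndexCap H n ≤ K.subgroupOf H :=
  normalIndexCap_le (hK.subgroupOf H) (Subgroup.subgroupOf_isOpen H K hKo) hKi

theorem map_OI_le_OI_index_mul {H : Subgroup G} [H.FiniteIndex] {n : ℕ}
    (hcap : normalIndexCap H n ≤ (obliqueCap H).subgroupOf H) :
    (OI H n).map H.subtype ≤ OI G (H.index * n) := by
  have hcap_le : ∀ K : Subgroup G, K.Normal → IsOpen (K : Set G) → ¬K ≤ H →
      normalIndexCap H n ≤ K.subgroupOf H := fun K hKn hKo hKH =>
    hcap.trans (Subgroup.subgroupOf_mono H (obliqueCap_le hKn hKo hKH))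
  have hcapG : (normalIndexCap H n).map H.subtype ≤ normalIndexCap G (H.index * n) := by
    refine le_normalIndexCap fun M hMn hMo hMi => Subgroup.map_le_iff_le_comap.2 ?_
    by_cases hMH : M ≤ H
    · exact normalIndexCap_le_subgroupOf hMn hMo (index_subgroupOf_le_of_le_index_mul hMH hMi)
    · exact hcap_le M hMn hMo hMH
  refine le_OI ((Subgroup.map_mono (OI_le_normalIndexCap n)).trans hcapG)
    fun K hKn hKo hK => Subgroup.map_le_iff_le_comap.2 ?_
  by_cases hKH : K ≤ H
  · refine OI_le_of_not_le (hKn.subgroupOf H) (Subgroup.subgroupOf_isOpen H K hKo) fun hle => hK ?_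
    rw [← Subgroup.map_subgroupOf_eq_of_le hKH]
    exact (Subgroup.map_mono hle).trans hcapG
  · exact (OI_le_normalIndexCap n).trans (hcap_le K hKn hKo hKH)

end Containment

section ClosedNormalClosure

variable {G : Type*} [Group G] [TopologicalSpace G] [IsTopologicalGroup G]

def closedNormalClosure (x : G) : Subgroup G :=
  (Subgroup.normalClosure {x}).topologicalClosure

instance closedNormalClosure_normal (x : G) : (closedNormalClosure x).Normal :=
  Subgroup.is_normal_topologicalClosure _

theorem isClosed_closedNormalClosure (x : G) : IsClosed (closedNormalClosure x : Set G) :=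
  Subgroup.isClosed_topologicalClosure _

theorem mem_closedNormalClosure_self (x : G) : x ∈ closedNormalClosure x :=
  Subgroup.le_topologicalClosure _ (Subgroup.subset_normalClosure rfl)

theorem closedNormalClosure_le {x : G} {M : Subgroup G} [M.Normal] (hMc : IsClosed (M : Set G))
    (hx : x ∈ M) : closedNormalClosure x ≤ M :=
  Subgroup.topologicalClosure_minimal _
    (Subgroup.normalClosure_le_normal (Set.singleton_subset_iff.2 hx)) hMc

theorem closedNormalClosure_le_sup {x y : G} {W : Subgroup G} [W.Normal]
    (hWo : IsOpen (W : Set G)) (hxy : y⁻¹ * x ∈ W) :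
    closedNormalClosure x ≤ closedNormalClosure y ⊔ W :=
  closedNormalClosure_le (Subgroup.isClosed_of_isOpen _ (Subgroup.isOpen_mono le_sup_right hWo))
    (mul_inv_cancel_left y x ▸ Subgroup.mul_mem_sup (mem_closedNormalClosure_self y) hxy)

theorem JustInfinite.isOpen_closedNormalClosure (hG : JustInfinite G) {x : G} (hx : x ≠ 1) :
    IsOpen (closedNormalClosure x : Set G) := by
  have : (closedNormalClosure x).FiniteIndex :=
    hG.2 _ inferInstance (isClosed_closedNormalClosure x) fun hbot =>
      hx (by simpa [hbot] using mem_closedNormalClosure_self x)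
  exact Subgroup.isOpen_of_isClosed_of_finiteIndex _ (isClosed_closedNormalClosure x)

theorem Subgroup.ne_bot_of_isOpen [CompactSpace G] [Infinite G] {K : Subgroup G}
    (hKo : IsOpen (K : Set G)) : K ≠ ⊥ := by
  rintro rfl
  have := Subgroup.quotient_finite_of_isOpen ⊥ hKo
  exact not_finite_iff_infinite.2 ‹Infinite G›
    (Finite.of_equiv _ QuotientGroup.quotientBot.toEquiv)

end ClosedNormalClosure

section Profinite

variable {G : Type*} [Group G] [TopologicalSpace G] [IsTopologicalGroup G] [CompactSpace G]
  [TotallyDisconnectedSpace G]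

theorem exists_not_mem_normalIndexCap {x : G} (hx : x ≠ 1) : ∃ n, x ∉ normalIndexCap G n := by
  obtain ⟨N, hN⟩ := ProfiniteGrp.exist_openNormalSubgroup_sub_open_nhds_of_one
    isOpen_compl_singleton (Set.mem_compl_singleton_iff.2 hx.symm)
  exact ⟨N.toSubgroup.index, fun hxN => hN (normalIndexCap_le N.isNormal' N.isOpen' le_rfl hxN) rfl⟩

theorem isOpen_setOf_exists_mem_closedNormalClosure {T : Set G} (hT : IsOpen T) :
    IsOpen {x : G | ∃ y ∈ T, y ∈ closedNormalClosure x} := by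
  refine isOpen_iff_mem_nhds.2 fun x ⟨y, hyT, hyx⟩ => ?_
  obtain ⟨⟨⟨W, hWo⟩, hWn⟩, hWT⟩ := ProfiniteGrp.exist_openNormalSubgroup_sub_open_nhds_of_one
    (hT.preimage (continuous_const_mul y)) (by simpa using hyT)
  have hnear : {x' : G | x'⁻¹ * x ∈ W} ∈ nhds x :=
    (hWo.preimage (by fun_prop)).mem_nhds (by simp)
  filter_upwards [hnear] with x' hx'
  obtain ⟨a, ha, w, hw, rfl⟩ : y ∈ (closedNormalClosure x' : Set G) * W := by
    rw [← Subgroup.mul_normal]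
    exact closedNormalClosure_le_sup hWo hx' hyx
  exact ⟨a, by simpa using hWT (W.inv_mem hw), ha⟩

theorem exists_forall_not_closedNormalClosure_subgroupOf_le (hG : JustInfinite G)
    {H : Subgroup G} (hHo : IsOpen (H : Set G)) :
    ∃ n₀, ∀ x ∉ H, ¬(closedNormalClosure x).subgroupOf H ≤ normalIndexCap H n₀ := by
  have : CompactSpace H := isCompact_iff_compactSpace.1 (H.isClosed_of_isOpen hHo).isCompact
  have : Infinite G := hG.1
  let U : ℕ → Set G := fun n =>
    {x | ∃ y ∈ Subtype.val '' (normalIndexCap H n : Set ↥H)ᶜ, y ∈ closedNormalClosure x}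
  have hval : IsOpenMap ((↑) : H → G) := hHo.isOpenMap_subtype_val
  have hUo : ∀ n, IsOpen (U n) := fun n => isOpen_setOf_exists_mem_closedNormalClosure
    (hval _ (isClosed_normalIndexCap n).isOpen_compl)
  have hUmono : Monotone U := by
    rintro m n hmn x ⟨_, ⟨y, hy, rfl⟩, hyx⟩
    exact ⟨y, ⟨y, fun hyn => hy (normalIndexCap_antitone hmn hyn), rfl⟩, hyx⟩
  have hcover : (H : Set G)ᶜ ⊆ ⋃ n, U n := by
    intro x hxH
    have hx1 : x ≠ 1 := fun hx1 => hxH (hx1 ▸ H.one_mem)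
    obtain ⟨a, ⟨haN, haH⟩, ha1⟩ := (Subgroup.bot_or_exists_ne_one _).resolve_left <|
      Subgroup.ne_bot_of_isOpen (K := closedNormalClosure x ⊓ H)
        ((hG.isOpen_closedNormalClosure hx1).inter hHo)
    obtain ⟨n, hn⟩ := exists_not_mem_normalIndexCap (x := (⟨a, haH⟩ : H))
      fun h => ha1 (congrArg Subtype.val h)
    exact Set.mem_iUnion.2 ⟨n, a, ⟨⟨a, haH⟩, hn, rfl⟩, haN⟩
  obtain ⟨n₀, hn₀⟩ :=
    hHo.isClosed_compl.isCompact.elim_directed_cover U hUo hcover hUmono.directed_le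
  refine ⟨n₀, fun x hx hle => ?_⟩
  obtain ⟨_, ⟨y, hy, rfl⟩, hyx⟩ := hn₀ hx
  exact hy (hle hyx)

theorem exists_forall_map_OI_le_obliqueCap (hG : JustInfinite G) {H : Subgroup G}
    (hHo : IsOpen (H : Set G)) :
    ∃ n₀, ∀ n ≥ n₀, (OI H n).map H.subtype ≤ obliqueCap H := by
  obtain ⟨n₀, hn₀⟩ := exists_forall_not_closedNormalClosure_subgroupOf_le hG hHo
  refine ⟨n₀, fun n hn => le_obliqueCap fun K hKn hKo hKH => Subgroup.map_le_iff_le_comap.2 ?_⟩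
  obtain ⟨x, hxK, hxH⟩ := SetLike.not_le_iff_exists.1 hKH
  have hxK : closedNormalClosure x ≤ K := closedNormalClosure_le (K.isClosed_of_isOpen hKo) hxK
  refine OI_le_of_not_le (hKn.subgroupOf H) (Subgroup.subgroupOf_isOpen H K hKo)
    fun hle => hn₀ x hxH ?_
  exact (Subgroup.subgroupOf_mono H hxK).trans (hle.trans (normalIndexCap_antitone hn))

theorem exists_forall_map_OI_le_OI_index_mul (hG : JustInfinite G) {H : Subgroup G}
    [H.FiniteIndex] (hHo : IsOpen (H : Set G)) :
    ∃ n₀, ∀ n ≥ n₀, (OI H n).map H.subtype ≤ OI G (H.index * n) := by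
  obtain ⟨n₀, hn₀⟩ := exists_forall_map_OI_le_obliqueCap hG hHo
  by_cases hD : obliqueCap H = ⊥
  · exact ⟨n₀, fun n hn => (hn₀ n hn).trans (hD ▸ bot_le)⟩
  have : (obliqueCap H).FiniteIndex := hG.2 _ inferInstance (isClosed_obliqueCap H) hD
  have hDo := Subgroup.isOpen_of_isClosed_of_finiteIndex _ (isClosed_obliqueCap H)
  exact ⟨((obliqueCap H).subgroupOf H).index, fun n hn =>
    map_OI_le_OI_index_mul (normalIndexCap_le_subgroupOf inferInstance hDo hn)⟩

end Profinite

theorem obFun_le_of_subgroup_general (G : Type*) [Group G] [TopologicalSpace G]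
    [IsTopologicalGroup G] [CompactSpace G] [TotallyDisconnectedSpace G]
    (hG : JustInfinite G) (H : Subgroup G) (hHcl : IsClosed (H : Set G))
    (h : ℕ) (hh : H.index = h) (hfin : H.FiniteIndex) :
    ∃ n₀ : ℕ, ∀ n : ℕ, n₀ ≤ n →
      obFun G (h * n) ≤ (h : Cardinal) * obFun ↥H n := by
  have := hfin
  obtain ⟨n₀, hn₀⟩ :=
    exists_forall_map_OI_le_OI_index_mul hG (H.isOpen_of_isClosed_of_finiteIndex hHcl)
  subst hh
  exact ⟨n₀, fun n hn => mk_quotient_le_index_mul (hn₀ n hn)⟩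

/-- Theorem C (i): if `G` is a just infinite profinite group and `H` is a closed
subgroup of index `h`, then `ob_G(hn) ≤ h ⬝ ob_H(n)` for all sufficiently large `n`. -/
theorem obFun_le_of_subgroup (G : Type*) [Group G] [TopologicalSpace G]
    [IsTopologicalGroup G] [CompactSpace G] [T2Space G] [TotallyDisconnectedSpace G]
    (hG : JustInfinite G) (H : Subgroup G) (hHcl : IsClosed (H : Set G))
    (h : ℕ) (hh : H.index = h) (hfin : H.FiniteIndex) :
    ∃ n₀ : ℕ, ∀ n : ℕ, n₀ ≤ n →
      obFun G (h * n) ≤ (h : Cardinal) * obFun ↥H n :=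
  obFun_le_of_subgroup_general G hG H hHcl h hh hfin
end

section
/- Let G be a just infinite profinite group, and for a positive integer n let 𝓘_n be the set of closed subgroups of G containing I⊲_n(G) (a finite set, since I⊲_n(G) is open). Then ob*_G(n) ≤ ∏_{L ∈ 𝓘_n} |G : L| · ob_L(n). -/
/-- The strong oblique core
`Ob*_G(H) = H ∩ ⋂ {K ≤_o G ∣ H ≤ N_G(K), K ≰ H}`. -/
def strongObliqueCore {G : Type*} [Group G] [TopologicalSpace G] (H : Subgroup G) :
    Subgroup G :=
  H ⊓ ⨅ (K : Subgroup G) (_ : IsOpen (K : Set G) ∧ H ≤ Subgroup.normalizer (K : Set G) ∧ ¬ K ≤ H), K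

/-- `OI*_n(G) = Ob*_G(I⊲_n(G))`. -/
def OIstar (G : Type*) [Group G] [TopologicalSpace G] (n : ℕ) : Subgroup G :=
  strongObliqueCore (normalIndexCap G n)

/-- The strong generalised obliquity function `ob*_G(n) = |G : OI*_n(G)|`. -/
noncomputable def obStarFun (G : Type*) [Group G] [TopologicalSpace G] (n : ℕ) : Cardinal :=
  Cardinal.mk (G ⧸ OIstar G n)

/-!
A nontrivial element `z` of a just infinite group lies in only finitely many closed normal
subgroups, since they all contain their intersection, a nontrivial closed normal subgroup and
hence of finite index. Among `n + 1` distinct elements two lie in the same coset of any subgroup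
of index at most `n`, so there are only finitely many open normal subgroups of index `≤ n`, and
`I = I⊲_n(G)` is open. If `K` is open, normalised by `I` and not contained in `I`, then `K` is an
open normal subgroup of `L = K ⊔ I ∈ 𝓘_n` not contained in `I⊲_n(L) ≤ I ∩ L`, so
`OI_n(L) ≤ K`. Hence `⋂_{L ∈ 𝓘_n} OI_n(L) ≤ OI*_n(G)`, and the index of this finite intersection
is at most `∏ |G : OI_n(L)| = ∏ |G : L| ⬝ ob_L(n)`.
-/

open Cardinal

namespace Subgroup

variable {G : Type*} [Group G]

theorem finite_setOf_le (Z : Subgroup G) [Z.FiniteIndex] : {H : Subgroup G | Z ≤ H}.Finite := by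
  let π := QuotientGroup.mk' Z.normalCore
  have : Finite (Subgroup (G ⧸ Z.normalCore)) := Finite.of_injective _ SetLike.coe_injective
  refine Set.Finite.subset (s := {H | Z.normalCore ≤ H}) ?_ fun H hH ↦ Z.normalCore_le.trans hH
  refine Set.Finite.of_finite_image (f := Subgroup.map π) (Set.toFinite _) ?_
  intro H₁ h₁ H₂ h₂ h
  rw [← comap_map_eq_self ((QuotientGroup.ker_mk' _).trans_le h₁), h,
    comap_map_eq_self ((QuotientGroup.ker_mk' _).trans_le h₂)]

theorem mk_quotient_le_of_le {H K : Subgroup G} (h : H ≤ K) : #(G ⧸ K) ≤ #(G ⧸ H) :=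
  mk_le_of_surjective (f := quotientMapOfLE h) fun q ↦
    QuotientGroup.induction_on q fun g ↦ ⟨g, rfl⟩

theorem mk_quotient_iInf_le {ι : Type*} [Fintype ι] (H : ι → Subgroup G) :
    #(G ⧸ ⨅ i, H i) ≤ ∏ i, #(G ⧸ H i) := by
  have := lift_mk_le_lift_mk_of_injective (quotientiInfEmbedding H).injective
  rwa [mk_pi, prod_eq_of_fintype, lift_lift, lift_le] at this

theorem mk_quotient_map_subtype (L : Subgroup G) (H : Subgroup L) :
    #(G ⧸ H.map L.subtype) = #(G ⧸ L) * #(L ⧸ H) := by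
  rw [mk_congr (quotientEquivProdOfLE (map_subtype_le H)), mk_prod, lift_id, lift_id,
    ← comap_subtype, comap_map_eq_self_of_injective L.subtype_injective]

end Subgroup

section Topological

variable {G : Type*} [Group G] [TopologicalSpace G]

abbrev ClosedSupergroups (H : Subgroup G) : Type _ :=
  {L : Subgroup G // IsClosed (L : Set G) ∧ H ≤ L}

instance (H : Subgroup G) [H.FiniteIndex] : Finite (ClosedSupergroups H) :=
  (H.finite_setOf_le.subset fun _ hL ↦ hL.2).to_subtype

theorem obliqueCore_le {H K : Subgroup G} (hK : K.Normal) (hKo : IsOpen (K : Set G))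
    (hKH : ¬ K ≤ H) : obliqueCore H ≤ K :=
  inf_le_right.trans (iInf₂_le K ⟨hK, hKo, hKH⟩)

theorem le_strongObliqueCore {H M : Subgroup G} (hMH : M ≤ H)
    (hM : ∀ K : Subgroup G, IsOpen (K : Set G) → H ≤ Subgroup.normalizer (K : Set G) →
      ¬ K ≤ H → M ≤ K) :
    M ≤ strongObliqueCore H :=
  le_inf hMH (le_iInf₂ fun K hK ↦ hM K hK.1 hK.2.1 hK.2.2)

theorem JustInfinite.finite_setOf_mem (hG : JustInfinite G) {z : G} (hz : z ≠ 1) :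
    {K : Subgroup G | K.Normal ∧ IsClosed (K : Set G) ∧ z ∈ K}.Finite := by
  set S := {K : Subgroup G | K.Normal ∧ IsClosed (K : Set G) ∧ z ∈ K}
  let Z := ⨅ K : S, (K : Subgroup G)
  have hzZ : z ∈ Z := Subgroup.mem_iInf.2 fun K ↦ K.2.2.2
  have hZclosed : IsClosed (Z : Set G) := by
    rw [Subgroup.coe_iInf]
    exact isClosed_iInter fun K ↦ K.2.2.1
  have : Z.FiniteIndex := hG.2 Z (Subgroup.normal_iInf_normal fun K ↦ K.2.1) hZclosed
    (ne_of_mem_of_not_mem' hzZ (by simpa using hz))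
  exact Z.finite_setOf_le.subset fun K hK ↦ iInf_le (fun K : S ↦ (K : Subgroup G)) ⟨K, hK⟩

variable [SeparatelyContinuousMul G] [CompactSpace G]

theorem JustInfinite.finite_setOf_isOpen_index_le (hG : JustInfinite G) (n : ℕ) :
    {K : Subgroup G | K.Normal ∧ IsOpen (K : Set G) ∧ K.index ≤ n}.Finite := by
  have : Infinite G := hG.1
  obtain ⟨s, hs⟩ := Infinite.exists_subset_card_eq G (n + 1)
  refine (s.offDiag.finite_toSet.biUnion fun p hp ↦
    hG.finite_setOf_mem (mt inv_mul_eq_one.1 (Finset.mem_offDiag.1 hp).2.2)).subset ?_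
  rintro K ⟨hK, hKo, hKn⟩
  have : Finite (G ⧸ K) := K.quotient_finite_of_isOpen hKo
  have : Fintype (G ⧸ K) := Fintype.ofFinite _
  obtain ⟨a, b, hab, h⟩ := Fintype.exists_ne_map_eq_of_card_lt (fun a : s ↦ (a : G ⧸ K)) (by
    rw [Fintype.card_coe, hs, ← Nat.card_eq_fintype_card]
    exact Nat.lt_succ_of_le hKn)
  exact Set.mem_biUnion (x := (a.1, b.1))
    (Finset.mem_offDiag.2 ⟨a.2, b.2, Subtype.coe_ne_coe.2 hab⟩)
    ⟨hK, K.isClosed_of_isOpen hKo, QuotientGroup.eq.1 h⟩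

theorem JustInfinite.isOpen_normalIndexCap (hG : JustInfinite G) (n : ℕ) :
    IsOpen (normalIndexCap G n : Set G) := by
  simp only [normalIndexCap, Subgroup.coe_iInf]
  exact (hG.finite_setOf_isOpen_index_le n).isOpen_biInter fun K hK ↦ hK.2.1

theorem normalIndexCap_le_subgroupOf_s8 (L : Subgroup G) (n : ℕ) :
    normalIndexCap L n ≤ (normalIndexCap G n).subgroupOf L := by
  intro x hx
  simp only [normalIndexCap, Subgroup.mem_iInf, Subgroup.mem_subgroupOf] at hx ⊢
  rintro N ⟨hN, hNo, hNn⟩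
  have := N.quotient_finite_of_isOpen hNo
  have : N.FiniteIndex := N.finiteIndex_of_finite_quotient
  have hrel : N.relIndex L ≤ N.index := by
    simpa using Subgroup.relIndex_le_of_le_right le_top
      (by simpa using Subgroup.FiniteIndex.index_ne_zero (H := N))
  exact Subgroup.mem_subgroupOf.1
    (hx (N.subgroupOf L) ⟨inferInstance, L.subgroupOf_isOpen N hNo, hrel.trans hNn⟩)

theorem OI_le_subgroupOf {n : ℕ} {K L : Subgroup G} (hKL : K ≤ L)
    (hL : L ≤ Subgroup.normalizer (K : Set G)) (hKo : IsOpen (K : Set G))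
    (hK : ¬ K ≤ normalIndexCap G n) : OI L n ≤ K.subgroupOf L := by
  refine obliqueCore_le ((Subgroup.normal_subgroupOf_iff_le_normalizer hKL).2 hL)
    (L.subgroupOf_isOpen K hKo) fun h ↦ hK fun k hk ↦ ?_
  exact Subgroup.mem_subgroupOf.1 <| normalIndexCap_le_subgroupOf_s8 L n <|
    h (Subgroup.mem_subgroupOf.2 hk : (⟨k, hKL hk⟩ : L) ∈ K.subgroupOf L)

theorem iInf_map_OI_le_OIstar {n : ℕ} (hI : IsOpen (normalIndexCap G n : Set G)) :
    ⨅ L : ClosedSupergroups (normalIndexCap G n), (OI L n).map L.1.subtype ≤ OIstar G n := by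
  set I := normalIndexCap G n
  let f (L : ClosedSupergroups I) := (OI L n).map L.1.subtype
  refine le_strongObliqueCore ((iInf_le f ⟨I, I.isClosed_of_isOpen hI, le_rfl⟩).trans
    (Subgroup.map_subtype_le _)) fun K hKo hIK hKI ↦ ?_
  let L := K ⊔ I
  have hLo : IsOpen (L : Set G) := Subgroup.isOpen_mono le_sup_left hKo
  calc _ ≤ (OI L n).map L.subtype := iInf_le f ⟨L, L.isClosed_of_isOpen hLo, le_sup_right⟩
    _ ≤ (K.subgroupOf L).map L.subtype := Subgroup.map_mono
        (OI_le_subgroupOf le_sup_left (sup_le Subgroup.le_normalizer hIK) hKo hKI)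
    _ = K := Subgroup.map_subgroupOf_eq_of_le le_sup_left

end Topological

theorem obStarFun_le_prod_general (G : Type*) [Group G] [TopologicalSpace G]
    [IsTopologicalGroup G] [CompactSpace G]
    (hG : JustInfinite G) (n : ℕ) :
    obStarFun G n ≤
      ∏ᶠ (L : Subgroup G) (_ : IsClosed (L : Set G) ∧ normalIndexCap G n ≤ L),
        Cardinal.mk (G ⧸ L) * obFun ↥L n := by
  set I := normalIndexCap G n
  have hI := hG.isOpen_normalIndexCap n
  have := I.quotient_finite_of_isOpen hI
  have : I.FiniteIndex := I.finiteIndex_of_finite_quotient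
  have := Fintype.ofFinite (ClosedSupergroups I)
  rw [← finprod_subtype_eq_finprod_cond, finprod_eq_prod_of_fintype]
  calc obStarFun G n ≤ #(G ⧸ ⨅ L : ClosedSupergroups I, (OI L n).map L.1.subtype) :=
        Subgroup.mk_quotient_le_of_le (iInf_map_OI_le_OIstar hI)
    _ ≤ ∏ L : ClosedSupergroups I, #(G ⧸ (OI L n).map L.1.subtype) :=
        Subgroup.mk_quotient_iInf_le _
    _ = _ := by simp only [Subgroup.mk_quotient_map_subtype]; rfl

/-- Theorem C (iii): if `G` is a just infinite profinite group and `𝓘_n` is the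
(finite) set of closed subgroups of `G` containing `I⊲_n(G)`, then
`ob*_G(n) ≤ ∏_{L ∈ 𝓘_n} |G : L| ⬝ ob_L(n)`.  (The product is a `finprod`, which is
meaningful since `𝓘_n` is indeed a finite set.) -/
theorem obStarFun_le_prod (G : Type*) [Group G] [TopologicalSpace G]
    [IsTopologicalGroup G] [CompactSpace G] [T2Space G] [TotallyDisconnectedSpace G]
    (hG : JustInfinite G) (n : ℕ) (hn : 0 < n) :
    obStarFun G n ≤
      ∏ᶠ (L : Subgroup G) (_ : IsClosed (L : Set G) ∧ normalIndexCap G n ≤ L),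
        Cardinal.mk (G ⧸ L) * obFun ↥L n :=
  obStarFun_le_prod_general G hG n
end

section
/- Let G be a profinite group that is a hereditary Φ⊲-group, and let 𝓚 be an infinite set of closed normal subgroups of G that is upward-closed, in the sense that whenever N₁ ∈ 𝓚 and N₂ is an open normal subgroup of G with N₁ ≤ N₂, then N₂ ∈ 𝓚. Then there is an infinite strictly descending chain K₁ > K₂ > K₃ > ... of open normal subgroups of G with K_i ∈ 𝓚 for all i. -/
/-!
Call an open member `K` of `𝓚` rich if infinitely many open members of `𝓚` lie strictly below
it. A closed normal subgroup is the intersection of the open normal subgroups containing it, so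
the upward closed infinite family `𝓚` has infinitely many open members and `G` itself is rich.
Given a rich `K`, the image `Φ` of `Φ⊲(K)` in `G` is normal of finite index in `G`, and `Φ` lies
in every maximal `G`-normal open subgroup of `K`; hence `N ⊔ Φ < K` for every open normal
`N < K`. Only finitely many subgroups contain `Φ`, so infinitely many open members `N < K` of `𝓚`
share the same `N ⊔ Φ`, which is a rich member strictly below `K`. Iterating gives the chain.
-/

/-- The normal Frattini subgroup `Φ⊲(G)`: the intersection of the open normal
subgroups with simple quotient. -/
def normalFrattini (G : Type*) [Group G] [TopologicalSpace G] : Subgroup G :=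
  ⨅ (N : Subgroup G) (_ : ∃ _hN : N.Normal, IsOpen (N : Set G) ∧ IsSimpleGroup (G ⧸ N)), N

section GroupTheory

variable {G : Type*} [Group G]

theorem Subgroup.finite_setOf_le_of_finiteIndex (N : Subgroup G) [N.Normal] [N.FiniteIndex] :
    {H : Subgroup G | N ≤ H}.Finite :=
  (Set.finite_range fun L : Subgroup (G ⧸ N) => L.comap (QuotientGroup.mk' N)).subset
    fun H (hNH : N ≤ H) => ⟨H.map (QuotientGroup.mk' N), by
      simp only [Subgroup.comap_map_eq, QuotientGroup.ker_mk', sup_eq_left.mpr hNH]⟩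

theorem QuotientGroup.isSimpleGroup_of_maximal {M : Subgroup G} [M.Normal] (hMtop : M ≠ ⊤)
    (hmax : ∀ H : Subgroup G, H.Normal → H ≠ ⊤ → M ≤ H → H = M) : IsSimpleGroup (G ⧸ M) := by
  have : Nontrivial (G ⧸ M) := QuotientGroup.nontrivial_iff.mpr hMtop
  refine ⟨fun Q hQ => ?_⟩
  have hcomap_inj := Subgroup.comap_injective (QuotientGroup.mk'_surjective M)
  have hMQ : M ≤ Q.comap (QuotientGroup.mk' M) := by
    simpa only [QuotientGroup.ker_mk'] using MonoidHom.ker_le_comap (QuotientGroup.mk' M) Q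
  by_cases hQtop : Q.comap (QuotientGroup.mk' M) = ⊤
  · exact Or.inr (hcomap_inj (by rw [hQtop, Subgroup.comap_top]))
  · refine Or.inl (hcomap_inj ?_)
    rw [MonoidHom.comap_bot, QuotientGroup.ker_mk']
    exact hmax _ (hQ.comap _) hQtop hMQ

theorem Subgroup.exists_isSimpleGroup_quotient_ge (L : Subgroup G) [L.Normal] [L.FiniteIndex]
    (hL : L ≠ ⊤) : ∃ (M : Subgroup G) (_ : M.Normal), L ≤ M ∧ IsSimpleGroup (G ⧸ M) := by
  obtain ⟨M, hLM, ⟨hLM', hMn, hMtop⟩, hmax⟩ := (L.finite_setOf_le_of_finiteIndex.subset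
    (Set.sep_subset _ fun H : Subgroup G => H.Normal ∧ H ≠ ⊤)).exists_le_maximal
      (a := L) ⟨(le_refl L : L ≤ L), ‹_›, hL⟩
  exact ⟨M, hMn, hLM, QuotientGroup.isSimpleGroup_of_maximal hMtop fun H hHn hHtop hMH =>
    le_antisymm (hmax ⟨hLM'.trans hMH, hHn, hHtop⟩ hMH) hMH⟩

end GroupTheory

theorem exists_seq_of_forall_exists_lt {α : Type*} [LT α] {p : α → Prop} {a : α} (ha : p a)
    (h : ∀ a, p a → ∃ b, p b ∧ b < a) : ∃ f : ℕ → α, (∀ n, p (f n)) ∧ ∀ n, f (n + 1) < f n := by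
  choose! next hnext_p hnext_lt using h
  have hp (n : ℕ) : p (next^[n] a) := by
    induction n with
    | zero => exact ha
    | succ n ih => rw [Function.iterate_succ_apply']; exact hnext_p _ ih
  exact ⟨(next^[·] a), hp, fun n => by
    simpa only [Function.iterate_succ_apply'] using hnext_lt _ (hp n)⟩

section Topology

variable {G : Type*} [Group G] [TopologicalSpace G]

theorem normalFrattini_le_comap {H : Type*} [Group H] [TopologicalSpace H] (f : G →* H)
    (hf : Continuous f) (hsurj : Function.Surjective f) :
    normalFrattini G ≤ (normalFrattini H).comap f := by
  intro x hx
  simp only [normalFrattini, Subgroup.mem_comap, Subgroup.mem_iInf] at hx ⊢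
  rintro M ⟨hMn, hMo, hMs⟩
  let φ : G →* H ⧸ M := (QuotientGroup.mk' M).comp f
  have e : G ⧸ M.comap f ≃* H ⧸ M :=
    (QuotientGroup.quotientMulEquivOfEq
        (by rw [← MonoidHom.comap_ker, QuotientGroup.ker_mk'])).trans
      (QuotientGroup.quotientKerEquivOfSurjective φ ((QuotientGroup.mk'_surjective M).comp hsurj))
  exact hx _ ⟨hMn.comap f, hMo.preimage hf, e.isSimpleGroup⟩

variable [IsTopologicalGroup G]

theorem Subgroup.Normal.map_subtype_normalFrattini {K : Subgroup G} (hK : K.Normal) :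
    ((normalFrattini K).map K.subtype).Normal := by
  refine ⟨?_⟩
  rintro _ ⟨x, hx, rfl⟩ g
  let c : K →* K := (MulAut.conjNormal g).toMonoidHom
  have hc : Continuous c := by
    refine continuous_induced_rng.mpr ?_
    simp only [c, Function.comp_def, MulEquiv.coe_toMonoidHom, MulAut.conjNormal_apply]
    fun_prop
  exact ⟨c x, normalFrattini_le_comap c hc (MulAut.conjNormal g).surjective hx,
    MulAut.conjNormal_apply g x⟩

variable [CompactSpace G]

theorem Subgroup.finiteIndex_of_isOpen (H : Subgroup G) (hH : IsOpen (H : Set G)) :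
    H.FiniteIndex :=
  have := H.quotient_finite_of_isOpen hH
  Subgroup.finiteIndex_of_finite_quotient

theorem Subgroup.exists_normal_isOpen_ge_notMem [TotallyDisconnectedSpace G] {N : Subgroup G}
    [N.Normal] (hNc : IsClosed (N : Set G)) {g : G} (hg : g ∉ N) :
    ∃ L : Subgroup G, L.Normal ∧ IsOpen (L : Set G) ∧ N ≤ L ∧ g ∉ L := by
  obtain ⟨H, hH⟩ := ProfiniteGrp.exist_openNormalSubgroup_sub_open_nhds_of_one
    (U := {x | g * x⁻¹ ∉ N}) (hNc.isOpen_compl.preimage (by fun_prop)) (by simpa using hg)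
  refine ⟨N ⊔ H.toSubgroup, inferInstance, Subgroup.isOpen_mono le_sup_right H.isOpen,
    le_sup_left, fun hgNH => ?_⟩
  obtain ⟨n, hn, h, hh, rfl⟩ := Subgroup.mem_sup_of_normal_left.mp hgNH
  exact hH hh (by simpa using hn)

/- If `Φ⊲(K) ⊄ C`, maximality forces `C ⊔ Φ⊲(K) = K`; but `C` lies in an open normal subgroup
`M` of `K` with simple quotient, and `M` contains `Φ⊲(K)`, so `M = K`. -/
theorem map_subtype_normalFrattini_le_of_maximal {K C : Subgroup G} [K.Normal] [C.Normal]
    (hCo : IsOpen (C : Set G)) (hCK : C < K)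
    (hmax : ∀ D : Subgroup G, D.Normal → IsOpen (D : Set G) → C ≤ D → D < K → D ≤ C) :
    (normalFrattini K).map K.subtype ≤ C := by
  set Φ := (normalFrattini K).map K.subtype
  have : Φ.Normal := ‹K.Normal›.map_subtype_normalFrattini
  by_contra hΦC
  have hsup : C ⊔ Φ = K := by
    refine (sup_le hCK.le (Subgroup.map_subtype_le _)).eq_of_not_lt fun hlt => hΦC ?_
    exact le_sup_right.trans
      (hmax _ inferInstance (Subgroup.isOpen_mono le_sup_left hCo) le_sup_left hlt)
  have := C.finiteIndex_of_isOpen hCo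
  obtain ⟨M, hMn, hCM, hMs⟩ := (C.subgroupOf K).exists_isSimpleGroup_quotient_ge
    fun h => hCK.not_ge (Subgroup.subgroupOf_eq_top.mp h)
  have hMo : IsOpen (M : Set K) := Subgroup.isOpen_mono hCM (hCo.preimage continuous_subtype_val)
  have hΦM : normalFrattini K ≤ M := iInf₂_le M ⟨hMn, hMo, hMs⟩
  have hKM : K ≤ M.map K.subtype := hsup.ge.trans <|
    sup_le (fun c hc => ⟨⟨c, hCK.le hc⟩, hCM hc, rfl⟩) (Subgroup.map_mono hΦM)
  have hMtop : M = ⊤ := Subgroup.eq_top_iff' M |>.mpr fun x =>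
    (Subgroup.mem_map_iff_mem K.subtype_injective).mp (hKM x.2)
  exact QuotientGroup.nontrivial_iff.mp hMs.toNontrivial hMtop

theorem sup_map_subtype_normalFrattini_lt {K N : Subgroup G} [K.Normal] [N.Normal]
    (hNo : IsOpen (N : Set G)) (hNK : N < K) :
    N ⊔ (normalFrattini K).map K.subtype < K := by
  have := N.finiteIndex_of_isOpen hNo
  obtain ⟨C, hNC, ⟨-, hCn, hCo, hCK⟩, hmax⟩ := (N.finite_setOf_le_of_finiteIndex.subset
    (Set.sep_subset _ fun D : Subgroup G => D.Normal ∧ IsOpen (D : Set G) ∧ D < K))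
      |>.exists_le_maximal (a := N) ⟨(le_refl N : N ≤ N), ‹_›, hNo, hNK⟩
  exact (sup_le hNC (map_subtype_normalFrattini_le_of_maximal hCo hCK
    fun D hDn hDo hCD hDK => hmax ⟨hNC.trans hCD, hDn, hDo, hDK⟩ hCD)).trans_lt hCK

theorem infinite_sep_isOpen_of_upwardClosed [TotallyDisconnectedSpace G] {𝓚 : Set (Subgroup G)}
    (h𝓚 : ∀ N ∈ 𝓚, N.Normal ∧ IsClosed (N : Set G)) (hinf : 𝓚.Infinite)
    (hup : ∀ N₁ ∈ 𝓚, ∀ N₂ : Subgroup G, N₂.Normal → IsOpen (N₂ : Set G) → N₁ ≤ N₂ → N₂ ∈ 𝓚) :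
    {N ∈ 𝓚 | IsOpen (N : Set G)}.Infinite := by
  set 𝓕 := {N ∈ 𝓚 | IsOpen (N : Set G)}
  have hle : ∀ N ∈ 𝓚, ∀ N' : Subgroup G, {L ∈ 𝓕 | N ≤ L} ⊆ {L ∈ 𝓕 | N' ≤ L} → N' ≤ N := by
    intro N hN N' hsub g hg
    by_contra hgN
    obtain ⟨hNn, hNc⟩ := h𝓚 N hN
    obtain ⟨L, hLn, hLo, hNL, hgL⟩ := Subgroup.exists_normal_isOpen_ge_notMem hNc hgN
    exact hgL ((hsub ⟨⟨hup N hN L hLn hLo hNL, hLo⟩, hNL⟩).2 hg)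
  have hinj : Set.InjOn (fun N => {L ∈ 𝓕 | N ≤ L}) 𝓚 := fun N hN N' hN' h =>
    le_antisymm (hle N' hN' N h.ge) (hle N hN N' h.le)
  exact fun h𝓕 => hinf <| Set.Finite.of_finite_image
    (h𝓕.finite_subsets.subset (Set.image_subset_iff.mpr fun _ _ => Set.sep_subset _ _)) hinj

theorem exists_lt_infinite_Iio_of_infinite_Iio {𝓕 : Set (Subgroup G)}
    (h𝓕 : ∀ N ∈ 𝓕, N.Normal ∧ IsOpen (N : Set G))
    (hup : ∀ N ∈ 𝓕, ∀ M : Subgroup G, M.Normal → IsOpen (M : Set G) → N ≤ M → M ∈ 𝓕)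
    {K : Subgroup G} (hK : K ∈ 𝓕) (hΦ : (normalFrattini K).FiniteIndex)
    (hinf : (𝓕 ∩ Set.Iio K).Infinite) : ∃ K' ∈ 𝓕, K' < K ∧ (𝓕 ∩ Set.Iio K').Infinite := by
  obtain ⟨hKn, hKo⟩ := h𝓕 K hK
  set Φ := (normalFrattini K).map K.subtype
  have : Φ.Normal := hKn.map_subtype_normalFrattini
  have : Φ.FiniteIndex := ⟨by
    rw [Subgroup.index_map_subtype]
    exact mul_ne_zero hΦ.index_ne_zero (K.finiteIndex_of_isOpen hKo).index_ne_zero⟩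
  obtain ⟨C, hC⟩ : ∃ C, (𝓕 ∩ Set.Iio K ∩ (· ⊔ Φ) ⁻¹' {C}).Infinite := by
    by_contra! hfin
    exact hinf <| Set.Finite.of_finite_fibers (· ⊔ Φ) (Φ.finite_setOf_le_of_finiteIndex.subset
      (Set.image_subset_iff.mpr fun _ _ => (le_sup_right : Φ ≤ _ ⊔ Φ))) fun C _ => hfin C
  obtain ⟨N, ⟨hN, hNK⟩, rfl : N ⊔ Φ = C⟩ := hC.nonempty
  obtain ⟨hNn, hNo⟩ := h𝓕 N hN
  refine ⟨N ⊔ Φ, hup N hN _ inferInstance (Subgroup.isOpen_mono le_sup_left hNo) le_sup_left,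
    sup_map_subtype_normalFrattini_lt hNo hNK, (hC.sdiff (Set.finite_singleton (N ⊔ Φ))).mono ?_⟩
  rintro D ⟨⟨⟨hD, -⟩, hDC : D ⊔ Φ = N ⊔ Φ⟩, hDne⟩
  exact ⟨hD, lt_of_le_of_ne (hDC ▸ le_sup_left) hDne⟩

end Topology

theorem descending_chain_of_upward_closed_general (G : Type*) [Group G] [TopologicalSpace G]
    [IsTopologicalGroup G] [CompactSpace G] [TotallyDisconnectedSpace G]
    (hphi : ∀ H : Subgroup G, IsOpen (H : Set G) → (normalFrattini ↥H).FiniteIndex)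
    (𝓚 : Set (Subgroup G))
    (h𝓚 : ∀ N ∈ 𝓚, N.Normal ∧ IsClosed (N : Set G))
    (h𝓚inf : 𝓚.Infinite)
    (hup : ∀ N₁ ∈ 𝓚, ∀ N₂ : Subgroup G, N₂.Normal → IsOpen (N₂ : Set G) →
      N₁ ≤ N₂ → N₂ ∈ 𝓚) :
    ∃ K : ℕ → Subgroup G, (∀ i, K i ∈ 𝓚 ∧ (K i).Normal ∧ IsOpen (K i : Set G)) ∧
      ∀ i, K (i + 1) < K i := by
  set 𝓕 := {N ∈ 𝓚 | IsOpen (N : Set G)}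
  have h𝓕 : ∀ N ∈ 𝓕, N.Normal ∧ IsOpen (N : Set G) := fun N hN => ⟨(h𝓚 N hN.1).1, hN.2⟩
  have h𝓕up : ∀ N ∈ 𝓕, ∀ M : Subgroup G, M.Normal → IsOpen (M : Set G) → N ≤ M → M ∈ 𝓕 :=
    fun N hN M hMn hMo hNM => ⟨hup N hN.1 M hMn hMo hNM, hMo⟩
  have h𝓕inf : 𝓕.Infinite := infinite_sep_isOpen_of_upwardClosed h𝓚 h𝓚inf hup
  have htop : ⊤ ∈ 𝓕 ∧ (𝓕 ∩ Set.Iio ⊤).Infinite := by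
    obtain ⟨N, hN⟩ := h𝓕inf.nonempty
    exact ⟨h𝓕up N hN ⊤ inferInstance (by simp) le_top, (h𝓕inf.sdiff (Set.finite_singleton ⊤)).mono
      fun M hM => ⟨hM.1, lt_top_iff_ne_top.mpr hM.2⟩⟩
  obtain ⟨K, hK, hKanti⟩ := exists_seq_of_forall_exists_lt
      (p := fun K => K ∈ 𝓕 ∧ (𝓕 ∩ Set.Iio K).Infinite) htop fun K ⟨hK, hKinf⟩ => by
    obtain ⟨K', hK', hK'K, hK'inf⟩ :=
      exists_lt_infinite_Iio_of_infinite_Iio h𝓕 h𝓕up hK (hphi K (h𝓕 K hK).2) hKinf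
    exact ⟨K', ⟨hK', hK'inf⟩, hK'K⟩
  exact ⟨K, fun i => ⟨(hK i).1.1, (h𝓕 _ (hK i).1).1, (hK i).1.2⟩, hKanti⟩

/-- Let `G` be a profinite group that is a hereditary `Φ⊲`-group, and let `𝓚` be an
infinite, upward-closed set of closed normal subgroups of `G`.  Then there is an
infinite strictly descending chain of open normal subgroups of `G` lying in `𝓚`. -/
theorem descending_chain_of_upward_closed (G : Type*) [Group G] [TopologicalSpace G]
    [IsTopologicalGroup G] [CompactSpace G] [T2Space G] [TotallyDisconnectedSpace G]
    (hphi : ∀ H : Subgroup G, IsOpen (H : Set G) → (normalFrattini ↥H).FiniteIndex)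
    (𝓚 : Set (Subgroup G))
    (h𝓚 : ∀ N ∈ 𝓚, N.Normal ∧ IsClosed (N : Set G))
    (h𝓚inf : 𝓚.Infinite)
    (hup : ∀ N₁ ∈ 𝓚, ∀ N₂ : Subgroup G, N₂.Normal → IsOpen (N₂ : Set G) →
      N₁ ≤ N₂ → N₂ ∈ 𝓚) :
    ∃ K : ℕ → Subgroup G, (∀ i, K i ∈ 𝓚 ∧ (K i).Normal ∧ IsOpen (K i : Set G)) ∧
      ∀ i, K (i + 1) < K i :=
  descending_chain_of_upward_closed_general G hphi 𝓚 h𝓚 h𝓚inf hup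
end
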